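/- arXiv:2604.17160 — 4 statements merged into one kernel-verified Lean document; each statement's English description precedes it below -/
import Mathlib

section
/- Let θ and Y be integrable real random variables and B a random variable in (0,1), with B, Y, θ independent, satisfying the distributional equation θ =_d BY + (1-B)θ. Then for any integer p ≥ 1 such that E|Y|^p < ∞ and E|θ|^p < ∞, and any real x: E[(θ-x)^p] = (1 - E[(1-B)^p])^{-1} · Σ_{j=0}^{p-1} C(p,j) E[B^{p-j}(1-B)^j] · E[(Y-x)^{p-j}] · E[(θ-x)^j]. -/
/-!
Write `Z = B Y + (1 - B) θ` and `Z - x = (1 - B)(θ - x) + B (Y - x)`. Expanding the `p`-th power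
binomially and factoring each term by independence expresses `E[(Z - x)^p]` through the moments of
`B`, `Y - x` and `θ - x`; the top term is `E[(1 - B)^p] · E[(θ - x)^p]`. Since `θ` and `Z` have the
same law, `m = E[(θ - x)^p]` therefore solves `m = S + E[(1 - B)^p] m`, and `E[(1 - B)^p] < 1`
because `0 < B < 1`.
-/

open MeasureTheory ProbabilityTheory Finset

section

variable {Ω : Type*} [MeasurableSpace Ω] {μ : Measure Ω}

lemma integrable_sub_const_pow_of_integrable_abs_pow [IsFiniteMeasure μ] {W : Ω → ℝ}
    (hW : AEStronglyMeasurable W μ) {p q : ℕ} (hWp : Integrable (fun ω => |W ω| ^ p) μ)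
    (hqp : q ≤ p) (x : ℝ) :
    Integrable (fun ω => (W ω - x) ^ q) μ := by
  rcases Nat.eq_zero_or_pos q with rfl | hq
  · simp
  have hW_Lp : MemLp W p μ := by
    rw [← integrable_norm_rpow_iff hW (by simp; omega) (by simp)]
    simpa [Real.rpow_natCast] using hWp
  have hWx_Lq : MemLp (fun ω => W ω - x) q μ :=
    (hW_Lp.sub (memLp_const x)).mono_exponent (by exact_mod_cast hqp)
  refine (integrable_norm_iff (hWx_Lq.1.pow q)).mp ?_
  simpa only [Pi.pow_apply, norm_pow] using hWx_Lq.integrable_norm_pow'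

lemma integral_pos_of_ae_pos [NeZero μ] {f : Ω → ℝ} (hf : Integrable f μ)
    (hpos : ∀ᵐ ω ∂μ, 0 < f ω) : 0 < ∫ ω, f ω ∂μ := by
  refine (integral_nonneg_of_ae (hpos.mono fun _ h => h.le)).lt_of_ne' fun h0 => ?_
  rw [integral_eq_zero_iff_of_nonneg_ae (hpos.mono fun _ h => h.le) hf] at h0
  obtain ⟨ω, hω, hω0⟩ := (hpos.and h0).exists
  exact hω.ne' hω0

lemma integral_mul_mul_comp_of_iIndepFun {α : Type*} [MeasurableSpace α] {X₀ X₁ X₂ : Ω → α}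
    (hindep : iIndepFun ![X₀, X₁, X₂] μ)
    (hX₀ : AEMeasurable X₀ μ) (hX₁ : AEMeasurable X₁ μ) (hX₂ : AEMeasurable X₂ μ)
    {f₀ f₁ f₂ : α → ℝ} (hf₀ : Measurable f₀) (hf₁ : Measurable f₁) (hf₂ : Measurable f₂) :
    ∫ ω, f₀ (X₀ ω) * f₁ (X₁ ω) * f₂ (X₂ ω) ∂μ =
      (∫ ω, f₀ (X₀ ω) ∂μ) * (∫ ω, f₁ (X₁ ω) ∂μ) * ∫ ω, f₂ (X₂ ω) ∂μ := by
  have h := hindep.integral_fun_prod_comp (f := ![f₀, f₁, f₂])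
    (fun i => by fin_cases i <;> assumption)
    (fun i => by fin_cases i <;> exact Measurable.aestronglyMeasurable (by assumption))
  simpa [Fin.prod_univ_three] using h

lemma mul_add_one_sub_mul_sub_pow (b y t x : ℝ) (p : ℕ) :
    (b * y + (1 - b) * t - x) ^ p = ∑ j ∈ range (p + 1),
      (p.choose j : ℝ) * (b ^ (p - j) * (1 - b) ^ j) * (y - x) ^ (p - j) * (t - x) ^ j := by
  rw [show b * y + (1 - b) * t - x = (1 - b) * (t - x) + b * (y - x) by ring, add_pow]
  refine sum_congr rfl fun j _ => ?_
  rw [mul_pow, mul_pow]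
  ring

lemma integral_mul_add_one_sub_mul_sub_pow [IsProbabilityMeasure μ] {B Y θ : Ω → ℝ}
    (hB : AEMeasurable B μ) (hY : AEMeasurable Y μ) (hθ : AEMeasurable θ μ)
    (hrange : ∀ᵐ ω ∂μ, B ω ∈ Set.Icc (0 : ℝ) 1) (hindep : iIndepFun ![B, Y, θ] μ) {p : ℕ}
    (hYp : Integrable (fun ω => |Y ω| ^ p) μ) (hθp : Integrable (fun ω => |θ ω| ^ p) μ)
    (x : ℝ) :
    ∫ ω, (B ω * Y ω + (1 - B ω) * θ ω - x) ^ p ∂μ = ∑ j ∈ range (p + 1),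
      (p.choose j : ℝ) * (∫ ω, B ω ^ (p - j) * (1 - B ω) ^ j ∂μ) *
        (∫ ω, (Y ω - x) ^ (p - j) ∂μ) * (∫ ω, (θ ω - x) ^ j ∂μ) := by
  simp only [mul_add_one_sub_mul_sub_pow]
  have hYθ : IndepFun Y θ μ := hindep.indepFun (i := 1) (j := 2) (by decide)
  rw [integral_finsetSum]
  · refine sum_congr rfl fun j _ => ?_
    rw [integral_mul_mul_comp_of_iIndepFun hindep hB hY hθ
      (f₀ := fun b => (p.choose j : ℝ) * (b ^ (p - j) * (1 - b) ^ j))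
      (f₁ := fun y => (y - x) ^ (p - j)) (f₂ := fun t => (t - x) ^ j)
      (by fun_prop) (by fun_prop) (by fun_prop), integral_const_mul]
  · intro j hj
    have hjp : j ≤ p := Nat.lt_succ_iff.mp (mem_range.mp hj)
    have hGH : Integrable (fun ω => (Y ω - x) ^ (p - j) * (θ ω - x) ^ j) μ :=
      (hYθ.comp ((measurable_id.sub_const x).pow_const _)
        ((measurable_id.sub_const x).pow_const _)).integrable_mul
        (integrable_sub_const_pow_of_integrable_abs_pow hY.aestronglyMeasurable hYp
          (Nat.sub_le p j) x)
        (integrable_sub_const_pow_of_integrable_abs_pow hθ.aestronglyMeasurable hθp hjp x)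
    have hF_bound :
        ∀ᵐ ω ∂μ, ‖(p.choose j : ℝ) * (B ω ^ (p - j) * (1 - B ω) ^ j)‖ ≤ p.choose j := by
      filter_upwards [hrange] with ω ⟨h0, h1⟩
      rw [norm_mul, Real.norm_natCast]
      refine mul_le_of_le_one_right (Nat.cast_nonneg _) ?_
      rw [Real.norm_of_nonneg (by positivity)]
      exact mul_le_one₀ (pow_le_one₀ h0 h1) (by positivity)
        (pow_le_one₀ (by linarith) (by linarith))
    simpa only [mul_assoc] using hGH.bdd_mul (by fun_prop) hF_bound

lemma integral_one_sub_pow_lt_one [IsProbabilityMeasure μ] {B : Ω → ℝ} (hB : AEMeasurable B μ)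
    (hrange : ∀ᵐ ω ∂μ, B ω ∈ Set.Ioc (0 : ℝ) 1) {p : ℕ} (hp : p ≠ 0) :
    ∫ ω, (1 - B ω) ^ p ∂μ < 1 := by
  have hint : Integrable (fun ω => (1 - B ω) ^ p) μ := by
    refine Integrable.of_bound (by fun_prop) 1 ?_
    filter_upwards [hrange] with ω ⟨h0, h1⟩
    rw [Real.norm_of_nonneg (by simp [h1])]
    exact pow_le_one₀ (by linarith) (by linarith)
  have hgap := integral_pos_of_ae_pos (f := fun ω => 1 - (1 - B ω) ^ p)
    ((integrable_const 1).sub hint) <| by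
    filter_upwards [hrange] with ω ⟨h0, h1⟩
    exact sub_pos.mpr (pow_lt_one₀ (by linarith) (by linarith) hp)
  rw [integral_sub (integrable_const 1) hint, integral_const, probReal_univ, one_smul] at hgap
  linarith

end

theorem stmt_2 {Ω : Type*} [MeasurableSpace Ω] (μ : Measure Ω) [IsProbabilityMeasure μ]
    (B Y θ : Ω → ℝ) (hB : Measurable B) (hY : Measurable Y) (hθ : Measurable θ)
    (hrange : ∀ᵐ ω ∂μ, B ω ∈ Set.Ioo (0:ℝ) 1)
    (hindep : iIndepFun ![B, Y, θ] μ)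
    (hdist : Measure.map θ μ = Measure.map (fun ω => B ω * Y ω + (1 - B ω) * θ ω) μ)
    (p : ℕ) (hp : 1 ≤ p)
    (hYp : Integrable (fun ω => |Y ω| ^ p) μ) (hθp : Integrable (fun ω => |θ ω| ^ p) μ)
    (x : ℝ) :
    ∫ ω, (θ ω - x) ^ p ∂μ =
      (1 - ∫ ω, (1 - B ω) ^ p ∂μ)⁻¹ *
        ∑ j ∈ Finset.range p,
          (p.choose j : ℝ) * (∫ ω, B ω ^ (p - j) * (1 - B ω) ^ j ∂μ) *
            (∫ ω, (Y ω - x) ^ (p - j) ∂μ) * (∫ ω, (θ ω - x) ^ j ∂μ) := by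
  have hθZ : IdentDistrib θ (fun ω => B ω * Y ω + (1 - B ω) * θ ω) μ μ :=
    ⟨hθ.aemeasurable, by fun_prop, hdist⟩
  have hfixed : ∫ ω, (θ ω - x) ^ p ∂μ = ∫ ω, (B ω * Y ω + (1 - B ω) * θ ω - x) ^ p ∂μ :=
    (hθZ.comp (by fun_prop : Measurable fun t : ℝ => (t - x) ^ p)).integral_eq
  rw [integral_mul_add_one_sub_mul_sub_pow hB.aemeasurable hY.aemeasurable hθ.aemeasurable
    (hrange.mono fun _ h => Set.Ioo_subset_Icc_self h) hindep hYp hθp x, sum_range_succ] at hfixed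
  have hc := integral_one_sub_pow_lt_one hB.aemeasurable
    (hrange.mono fun _ h => Set.Ioo_subset_Ioc_self h) (by omega : p ≠ 0)
  simp only [Nat.choose_self, Nat.sub_self, pow_zero, one_mul, integral_const, probReal_univ,
    one_smul, Nat.cast_one] at hfixed
  field_simp [(sub_pos.mpr hc).ne']
  linarith
end

section
/- If B ~ Beta(a,b) with a,b > 0, then in the stochastic equation θ =_d BY + (1-B)θ (with B, Y, θ independent, E[Y^2] < ∞, E[θ^2] < ∞), the variance satisfies Var(θ) = ((a+1)/(a+2b+1)) Var(Y) = Var(Y)/(1+b*) where b* = 2b/(1+a). -/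
/-!
Taking first moments in `θ =ᵈ BY + (1 - B)θ` and using independence gives
`E[B] E θ = E[B] E Y`, so `θ` and `Y` share their mean `m`. Taking second moments, the cross
term is `2 E[B(1 - B)] m²`, and subtracting `m²` from both sides leaves
`(2 E[B] - E[B²]) Var θ = E[B²] Var Y`. For `B ~ Beta(a, b)` the moments come from the Beta
integral: `E[B] = a/(a+b)` and `E[B²] = a(a+1)/((a+b)(a+b+1))`, whence the ratio
`(a+1)/(a+2b+1)`.
-/

open MeasureTheory ProbabilityTheory Set

namespace ProbabilityTheory

theorem integral_Ioo_rpow_mul_one_sub_rpow {u v : ℝ} (hu : 0 < u) (hv : 0 < v) :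
    ∫ x in Ioo (0 : ℝ) 1, x ^ (u - 1) * (1 - x) ^ (v - 1) = beta u v := by
  have hcomplex : Complex.betaIntegral u v =
      ((∫ x in Ioo (0 : ℝ) 1, x ^ (u - 1) * (1 - x) ^ (v - 1) : ℝ) : ℂ) := by
    rw [Complex.betaIntegral, intervalIntegral.integral_of_le zero_le_one,
      integral_Ioc_eq_integral_Ioo, ← integral_complex_ofReal]
    refine setIntegral_congr_fun measurableSet_Ioo fun x ⟨hx0, hx1⟩ => ?_
    rw [Complex.ofReal_mul, Complex.ofReal_cpow hx0.le, Complex.ofReal_cpow (by linarith)]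
    push_cast
    ring
  rw [beta_eq_betaIntegralReal u v hu hv, hcomplex, Complex.ofReal_re]

theorem beta_add_one_left {a b : ℝ} (ha : a ≠ 0) (hab : a + b ≠ 0) :
    beta (a + 1) b = a / (a + b) * beta a b := by
  rw [beta, beta, add_right_comm, Real.Gamma_add_one ha, Real.Gamma_add_one hab,
    mul_assoc, mul_div_mul_comm]

theorem betaMeasure_eq_withDensity_restrict (a b : ℝ) :
    betaMeasure a b = (volume.restrict (Ioo 0 1)).withDensity
      fun x => ENNReal.ofReal (1 / beta a b * x ^ (a - 1) * (1 - x) ^ (b - 1)) := by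
  rw [betaMeasure, ← withDensity_indicator measurableSet_Ioo]
  congr 1
  funext x
  by_cases hx : x ∈ Ioo 0 1
  · rw [indicator_of_mem hx, betaPDF_of_pos_lt_one hx.1 hx.2]
  · rw [indicator_of_notMem hx, betaPDF_eq, if_neg (show ¬(0 < x ∧ x < 1) from hx),
      ENNReal.ofReal_zero]

theorem integral_pow_betaMeasure {a b : ℝ} (ha : 0 < a) (hb : 0 < b) (n : ℕ) :
    ∫ x, x ^ n ∂betaMeasure a b = beta (a + n) b / beta a b := by
  rw [betaMeasure_eq_withDensity_restrict, integral_withDensity_eq_integral_toReal_smul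
    (by fun_prop) (ae_of_all _ fun _ => ENNReal.ofReal_lt_top)]
  calc ∫ x in Ioo 0 1, (ENNReal.ofReal (1 / beta a b * x ^ (a - 1) * (1 - x) ^ (b - 1))).toReal
          • x ^ n
      = ∫ x in Ioo 0 1, 1 / beta a b * (x ^ (a + n - 1) * (1 - x) ^ (b - 1)) := by
        refine setIntegral_congr_fun measurableSet_Ioo fun x ⟨hx0, hx1⟩ => ?_
        have hdens : 0 ≤ 1 / beta a b * x ^ (a - 1) * (1 - x) ^ (b - 1) := by
          have := beta_pos ha hb
          have := Real.rpow_pos_of_pos (sub_pos.2 hx1) (b - 1)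
          positivity
        rw [ENNReal.toReal_ofReal hdens, smul_eq_mul, show a + n - 1 = a - 1 + n by ring,
          Real.rpow_add hx0, Real.rpow_natCast]
        ring
    _ = beta (a + n) b / beta a b := by
        rw [integral_const_mul, integral_Ioo_rpow_mul_one_sub_rpow (by positivity) hb]
        ring

theorem integral_id_betaMeasure {a b : ℝ} (ha : 0 < a) (hb : 0 < b) :
    ∫ x, x ∂betaMeasure a b = a / (a + b) := by
  have := beta_pos ha hb
  have h := integral_pow_betaMeasure ha hb 1
  simp only [pow_one, Nat.cast_one] at h
  rw [h, beta_add_one_left ha.ne' (by positivity)]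
  field_simp

theorem integral_sq_betaMeasure {a b : ℝ} (ha : 0 < a) (hb : 0 < b) :
    ∫ x, x ^ 2 ∂betaMeasure a b = a * (a + 1) / ((a + b) * (a + b + 1)) := by
  have := beta_pos ha hb
  rw [integral_pow_betaMeasure ha hb 2, Nat.cast_ofNat, show a + 2 = a + 1 + 1 by ring,
    beta_add_one_left (by positivity) (by positivity), beta_add_one_left ha.ne' (by positivity)]
  field_simp
  ring

theorem ae_mem_Ioo_betaMeasure (a b : ℝ) : ∀ᵐ x ∂betaMeasure a b, x ∈ Ioo 0 1 := by
  rw [betaMeasure_eq_withDensity_restrict]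
  exact (withDensity_absolutelyContinuous _ _).ae_le (ae_restrict_mem measurableSet_Ioo)

section RandomConvexCombination

variable {Ω : Type*} [MeasurableSpace Ω] {μ : Measure Ω} {B U V : Ω → ℝ}

theorem indepFun_mul_one_sub_mul_of_iIndepFun (hBm : Measurable B) (hUm : Measurable U)
    (hVm : Measurable V) (hindep : iIndepFun ![B, U, V] μ) :
    IndepFun (fun ω => B ω * (1 - B ω)) (fun ω => U ω * V ω) μ := by
  have hmeas : ∀ i, Measurable (![B, U, V] i) := fun i => by fin_cases i <;> assumption
  exact (hindep.indepFun_prodMk hmeas 1 2 0 (by decide) (by decide)).symm.comp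
    (measurable_id.mul (measurable_const.sub measurable_id)) (measurable_fst.mul measurable_snd)

variable [IsProbabilityMeasure μ]

theorem integral_mul_add_one_sub_mul (hBU : IndepFun B U μ) (hBV : IndepFun B V μ)
    (hB : Integrable B μ) (hU : Integrable U μ) (hV : Integrable V μ) :
    ∫ ω, (B ω * U ω + (1 - B ω) * V ω) ∂μ = μ[B] * μ[U] + (1 - μ[B]) * μ[V] := by
  have h1BV : IndepFun (fun ω => 1 - B ω) V μ :=
    hBV.comp (measurable_const.sub measurable_id) measurable_id
  have h1B : Integrable (fun ω => 1 - B ω) μ := (integrable_const 1).sub hB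
  have hBUi : Integrable (fun ω => B ω * U ω) μ := hBU.integrable_mul hB hU
  have h1BVi : Integrable (fun ω => (1 - B ω) * V ω) μ := h1BV.integrable_mul h1B hV
  rw [integral_add hBUi h1BVi,
    hBU.integral_fun_mul_eq_mul_integral hB.1 hU.1,
    h1BV.integral_fun_mul_eq_mul_integral h1B.1 hV.1, integral_sub (integrable_const 1) hB,
    integral_const, probReal_univ, one_smul]

theorem integral_mul_one_sub (hB : MemLp B 2 μ) :
    ∫ ω, B ω * (1 - B ω) ∂μ = μ[B] - ∫ ω, B ω ^ 2 ∂μ := by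
  simp only [mul_one_sub, ← sq]
  exact integral_sub (hB.integrable one_le_two) hB.integrable_sq

theorem integral_one_sub_sq (hB : MemLp B 2 μ) :
    ∫ ω, (1 - B ω) ^ 2 ∂μ = 1 - 2 * μ[B] + ∫ ω, B ω ^ 2 ∂μ := by
  have h2B : Integrable (fun ω => 2 * B ω) μ := (hB.integrable one_le_two).const_mul 2
  have h12B : Integrable (fun ω => 1 - 2 * B ω) μ := (integrable_const 1).sub h2B
  simp only [sub_sq, one_pow, mul_one]
  rw [integral_add h12B hB.integrable_sq, integral_sub (integrable_const 1) h2B,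
    integral_const_mul, integral_const, probReal_univ, one_smul]

theorem integral_sq_mul_add_one_sub_mul (hBm : Measurable B) (hUm : Measurable U)
    (hVm : Measurable V) (hindep : iIndepFun ![B, U, V] μ)
    (hB : MemLp B 2 μ) (hU : MemLp U 2 μ) (hV : MemLp V 2 μ) :
    ∫ ω, (B ω * U ω + (1 - B ω) * V ω) ^ 2 ∂μ =
      (∫ ω, B ω ^ 2 ∂μ) * ∫ ω, U ω ^ 2 ∂μ
        + 2 * (μ[B] - ∫ ω, B ω ^ 2 ∂μ) * (μ[U] * μ[V])
        + (1 - 2 * μ[B] + ∫ ω, B ω ^ 2 ∂μ) * ∫ ω, V ω ^ 2 ∂μ := by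
  have hUV : IndepFun U V μ := hindep.indepFun (show (1 : Fin 3) ≠ 2 by decide)
  have hB2U2 : IndepFun (fun ω => B ω ^ 2) (fun ω => U ω ^ 2) μ :=
    (hindep.indepFun (show (0 : Fin 3) ≠ 1 by decide)).comp
      (measurable_id.pow_const 2) (measurable_id.pow_const 2)
  have hB2V2 : IndepFun (fun ω => (1 - B ω) ^ 2) (fun ω => V ω ^ 2) μ :=
    (hindep.indepFun (show (0 : Fin 3) ≠ 2 by decide)).comp
      ((measurable_const.sub measurable_id).pow_const 2) (measurable_id.pow_const 2)
  have hBUV := indepFun_mul_one_sub_mul_of_iIndepFun hBm hUm hVm hindep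
  have h1B : MemLp (fun ω => 1 - B ω) 2 μ := (memLp_const 1).sub hB
  have hB1B : Integrable (fun ω => B ω * (1 - B ω)) μ := hB.integrable_mul h1B
  have hUVi : Integrable (fun ω => U ω * V ω) μ := hU.integrable_mul hV
  have hB2U2i : Integrable (fun ω => B ω ^ 2 * U ω ^ 2) μ :=
    hB2U2.integrable_mul hB.integrable_sq hU.integrable_sq
  have hBUVi : Integrable (fun ω => 2 * (B ω * (1 - B ω) * (U ω * V ω))) μ :=
    (hBUV.integrable_mul hB1B hUVi).const_mul 2
  have hB2V2i : Integrable (fun ω => (1 - B ω) ^ 2 * V ω ^ 2) μ :=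
    hB2V2.integrable_mul h1B.integrable_sq hV.integrable_sq
  calc ∫ ω, (B ω * U ω + (1 - B ω) * V ω) ^ 2 ∂μ
      = ∫ ω, (B ω ^ 2 * U ω ^ 2 + 2 * (B ω * (1 - B ω) * (U ω * V ω))
          + (1 - B ω) ^ 2 * V ω ^ 2) ∂μ := by congr 1; ext ω; ring
    _ = (∫ ω, B ω ^ 2 ∂μ) * (∫ ω, U ω ^ 2 ∂μ)
          + 2 * ((∫ ω, B ω * (1 - B ω) ∂μ) * μ[U] * μ[V])
          + (∫ ω, (1 - B ω) ^ 2 ∂μ) * ∫ ω, V ω ^ 2 ∂μ := by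
        have hsumi : Integrable (fun ω => B ω ^ 2 * U ω ^ 2
            + 2 * (B ω * (1 - B ω) * (U ω * V ω))) μ := hB2U2i.add hBUVi
        rw [integral_add hsumi hB2V2i, integral_add hB2U2i hBUVi, integral_const_mul,
          hB2U2.integral_fun_mul_eq_mul_integral hB.integrable_sq.1 hU.integrable_sq.1,
          hBUV.integral_fun_mul_eq_mul_integral hB1B.1 hUVi.1,
          hUV.integral_fun_mul_eq_mul_integral hU.1 hV.1,
          hB2V2.integral_fun_mul_eq_mul_integral h1B.integrable_sq.1 hV.integrable_sq.1]
        ring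
    _ = _ := by
        rw [integral_mul_one_sub hB, integral_one_sub_sq hB]
        ring

theorem mul_variance_eq_of_identDistrib_mul_add_one_sub_mul (hBm : Measurable B)
    (hUm : Measurable U) (hVm : Measurable V) (hindep : iIndepFun ![B, U, V] μ)
    (hB : MemLp B 2 μ) (hU : MemLp U 2 μ) (hV : MemLp V 2 μ) (hBmean : μ[B] ≠ 0)
    (hfix : IdentDistrib V (fun ω => B ω * U ω + (1 - B ω) * V ω) μ μ) :
    (2 * μ[B] - ∫ ω, B ω ^ 2 ∂μ) * variance V μ =
      (∫ ω, B ω ^ 2 ∂μ) * variance U μ := by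
  have hBU : IndepFun B U μ := hindep.indepFun (show (0 : Fin 3) ≠ 1 by decide)
  have hBV : IndepFun B V μ := hindep.indepFun (show (0 : Fin 3) ≠ 2 by decide)
  have hmean : μ[V] = μ[U] := by
    have h := hfix.integral_eq
    rw [integral_mul_add_one_sub_mul hBU hBV (hB.integrable one_le_two)
      (hU.integrable one_le_two) (hV.integrable one_le_two)] at h
    exact mul_left_cancel₀ hBmean (by linear_combination h)
  have hsq := (hfix.comp (measurable_id.pow_const 2)).integral_eq
  simp only [Function.comp_def, id] at hsq
  rw [integral_sq_mul_add_one_sub_mul hBm hUm hVm hindep hB hU hV, hmean] at hsq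
  rw [variance_eq_sub hV, variance_eq_sub hU, hmean]
  simp only [Pi.pow_apply]
  linear_combination hsq

end RandomConvexCombination

end ProbabilityTheory

theorem stmt_5 {Ω : Type*} [MeasurableSpace Ω] (μ : Measure Ω) [IsProbabilityMeasure μ]
    (a b : ℝ) (ha : 0 < a) (hb : 0 < b)
    (B Y θ : Ω → ℝ) (hB : Measurable B) (hY : Measurable Y) (hθ : Measurable θ)
    (hBdist : Measure.map B μ =
      (volume.restrict (Set.Ioo (0:ℝ) 1)).withDensity (fun s =>
        ENNReal.ofReal (s ^ (a - 1) * (1 - s) ^ (b - 1) * Real.Gamma (a + b) /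
          (Real.Gamma a * Real.Gamma b))))
    (hindep : iIndepFun ![B, Y, θ] μ)
    (hdist : Measure.map θ μ = Measure.map (fun ω => B ω * Y ω + (1 - B ω) * θ ω) μ)
    (hY2 : Integrable (fun ω => Y ω ^ 2) μ) (hθ2 : Integrable (fun ω => θ ω ^ 2) μ) :
    variance θ μ = (a + 1) / (a + 2 * b + 1) * variance Y μ ∧
    (a + 1) / (a + 2 * b + 1) = 1 / (1 + 2 * b / (1 + a)) := by
  have hBbeta : Measure.map B μ = betaMeasure a b := by
    rw [hBdist, betaMeasure_eq_withDensity_restrict]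
    congr 1
    funext s
    congr 1
    rw [beta, one_div_div]
    ring
  have hB01 : ∀ᵐ ω ∂μ, B ω ∈ Set.Ioo 0 1 :=
    ae_of_ae_map hB.aemeasurable (hBbeta ▸ ae_mem_Ioo_betaMeasure a b)
  have hBL2 : MemLp B 2 μ := MemLp.of_bound hB.aestronglyMeasurable 1 <| hB01.mono
    fun ω h => by rw [Real.norm_eq_abs, abs_le]; constructor <;> linarith [h.1, h.2]
  have hmean : μ[B] = a / (a + b) := by
    rw [← integral_map (f := fun x => x) hB.aemeasurable aestronglyMeasurable_id, hBbeta,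
      integral_id_betaMeasure ha hb]
  have hsq : ∫ ω, B ω ^ 2 ∂μ = a * (a + 1) / ((a + b) * (a + b + 1)) := by
    rw [← integral_map (f := fun x => x ^ 2) hB.aemeasurable (by fun_prop), hBbeta,
      integral_sq_betaMeasure ha hb]
  have key := mul_variance_eq_of_identDistrib_mul_add_one_sub_mul hB hY hθ hindep hBL2
    ((memLp_two_iff_integrable_sq hY.aestronglyMeasurable).2 hY2)
    ((memLp_two_iff_integrable_sq hθ.aestronglyMeasurable).2 hθ2)
    (by rw [hmean]; positivity) ⟨hθ.aemeasurable, by fun_prop, hdist⟩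
  rw [hmean, hsq] at key
  constructor
  · field_simp at key ⊢
    linear_combination key
  · field_simp
    ring
end

section
/- Fix b₀ > 0 and define, for x > 1/2, ρ(x) = [2x(2x+1) / ((2x-1)^2 - 1 + 3(2x-1)(b₀x+1) + 3(b₀x+1)^2)] · (b₀+1)(b₀+2)/2. Then ρ is strictly decreasing on (1/2, ∞), ρ(1) = 1, the limit of ρ(x) as x → 1/2⁺ equals (b₀+1)(b₀+2)/(2 + 3b₀ + (3/4)b₀²), and the limit as x → ∞ equals 2(b₀+1)(b₀+2)/(4 + 6b₀ + 3b₀²). -/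
open Filter Topology

/-- The skewness ratio `ρ(x)` of the variance-matched `GD(2x-1, b₀x, P₀)` prior
relative to the Dirichlet with parameter `b₀`. -/
noncomputable def skewRatio (b₀ x : ℝ) : ℝ :=
  2 * x * (2 * x + 1) /
      ((2 * x - 1) ^ 2 - 1 + 3 * (2 * x - 1) * (b₀ * x + 1) + 3 * (b₀ * x + 1) ^ 2) *
    ((b₀ + 1) * (b₀ + 2) / 2)

/-!
The denominator of `ρ(x)` factors as `x · ((4 + 6b₀ + 3b₀²) x + (2 + 3b₀))`, so after cancelling
`x` the ratio is a Möbius transformation `(a x + b) / (c x + d)`. Its determinant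
`a d - b c = -3 b₀² (b₀ + 1) (b₀ + 2)` is negative, which makes it strictly decreasing on each
half-line where `c x + d > 0`; its limit at infinity is `a / c`, and the limit at `1/2` is
the value there, by continuity.
-/

section AffineDiv

variable {a b c d : ℝ}

theorem strictAntiOn_affine_div_affine (h : a * d < b * c) :
    StrictAntiOn (fun x => (a * x + b) / (c * x + d)) {x | 0 < c * x + d} := by
  intro x (hx : 0 < c * x + d) y (hy : 0 < c * y + d) hxy
  rw [div_lt_div_iff₀ hy hx]
  nlinarith [mul_lt_mul_of_pos_right h (sub_pos.mpr hxy)]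

theorem tendsto_affine_div_affine_atTop (hc : c ≠ 0) :
    Tendsto (fun x => (a * x + b) / (c * x + d)) atTop (𝓝 (a / c)) := by
  have hinv : Tendsto (fun x : ℝ => x⁻¹) atTop (𝓝 0) := tendsto_inv_atTop_zero
  have hlim : Tendsto (fun x : ℝ => (a + b * x⁻¹) / (c + d * x⁻¹)) atTop
      (𝓝 ((a + b * 0) / (c + d * 0))) :=
    (tendsto_const_nhds.add (hinv.const_mul b)).div (tendsto_const_nhds.add (hinv.const_mul d))
      (by simpa using hc)
  simp only [mul_zero, add_zero] at hlim
  refine hlim.congr' ?_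
  filter_upwards [eventually_ne_atTop 0] with x hx
  rw [← mul_div_mul_right _ _ hx]
  field_simp

end AffineDiv

section SkewRatio

variable {b₀ x : ℝ}

theorem skewRatio_eq_affine_div_affine (hx : x ≠ 0) :
    skewRatio b₀ x = (2 * (b₀ + 1) * (b₀ + 2) * x + (b₀ + 1) * (b₀ + 2)) /
      ((4 + 6 * b₀ + 3 * b₀ ^ 2) * x + (2 + 3 * b₀)) := by
  have hden : (2 * x - 1) ^ 2 - 1 + 3 * (2 * x - 1) * (b₀ * x + 1) + 3 * (b₀ * x + 1) ^ 2 =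
      x * ((4 + 6 * b₀ + 3 * b₀ ^ 2) * x + (2 + 3 * b₀)) := by ring
  have hnum : 2 * x * (2 * x + 1) = x * (2 * (2 * x + 1)) := by ring
  rw [skewRatio, hnum, hden, mul_div_mul_left _ _ hx]
  ring

theorem skewRatio_one (hb₀ : 0 < b₀) : skewRatio b₀ 1 = 1 := by
  rw [skewRatio_eq_affine_div_affine one_ne_zero, div_eq_one_iff_eq (by positivity)]
  ring

theorem skewRatio_half :
    skewRatio b₀ (1 / 2) = (b₀ + 1) * (b₀ + 2) / (2 + 3 * b₀ + 3 / 4 * b₀ ^ 2) := by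
  rw [skewRatio]
  ring

theorem continuousAt_skewRatio_half (hb₀ : 0 < b₀) : ContinuousAt (skewRatio b₀) (1 / 2) := by
  have hden : (2 * (1 / 2 : ℝ) - 1) ^ 2 - 1 + 3 * (2 * (1 / 2) - 1) * (b₀ * (1 / 2) + 1) +
      3 * (b₀ * (1 / 2) + 1) ^ 2 ≠ 0 := by
    ring_nf
    positivity
  unfold skewRatio
  fun_prop (disch := exact hden)

theorem strictAntiOn_skewRatio (hb₀ : 0 < b₀) : StrictAntiOn (skewRatio b₀) (Set.Ioi 0) := by
  have hdet : 2 * (b₀ + 1) * (b₀ + 2) * (2 + 3 * b₀) <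
      (b₀ + 1) * (b₀ + 2) * (4 + 6 * b₀ + 3 * b₀ ^ 2) := by
    nlinarith [show 0 < b₀ ^ 2 * ((b₀ + 1) * (b₀ + 2)) by positivity]
  refine ((strictAntiOn_affine_div_affine hdet).mono fun x (hx : 0 < x) => ?_).congr
    fun x (hx : 0 < x) => (skewRatio_eq_affine_div_affine hx.ne').symm
  simp only [Set.mem_ofPred_eq]
  positivity

theorem tendsto_skewRatio_atTop (hb₀ : 0 < b₀) :
    Tendsto (skewRatio b₀) atTop (𝓝 (2 * (b₀ + 1) * (b₀ + 2) / (4 + 6 * b₀ + 3 * b₀ ^ 2))) := by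
  refine (tendsto_affine_div_affine_atTop (b := (b₀ + 1) * (b₀ + 2)) (d := 2 + 3 * b₀)
    (by positivity)).congr' ?_
  filter_upwards [eventually_gt_atTop 0] with x hx
  exact (skewRatio_eq_affine_div_affine hx.ne').symm

end SkewRatio

theorem stmt_7 (b₀ : ℝ) (hb₀ : 0 < b₀) :
    StrictAntiOn (skewRatio b₀) (Set.Ioi (1 / 2 : ℝ)) ∧
    skewRatio b₀ 1 = 1 ∧
    Tendsto (skewRatio b₀) (nhdsWithin (1 / 2) (Set.Ioi (1 / 2 : ℝ)))
      (nhds ((b₀ + 1) * (b₀ + 2) / (2 + 3 * b₀ + 3 / 4 * b₀ ^ 2))) ∧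
    Tendsto (skewRatio b₀) atTop
      (nhds (2 * (b₀ + 1) * (b₀ + 2) / (4 + 6 * b₀ + 3 * b₀ ^ 2))) := by
  refine ⟨(strictAntiOn_skewRatio hb₀).mono (Set.Ioi_subset_Ioi (by norm_num)),
    skewRatio_one hb₀, ?_, tendsto_skewRatio_atTop hb₀⟩
  rw [← skewRatio_half]
  exact (continuousAt_skewRatio_half hb₀).continuousWithinAt.tendsto
end

section
/- Let H be a probability measure on (0,1), M_{i,j} = ∫ s^i(1-s)^j dH, and δ_j = M_{1,j}/(1 - M_{0,j+1}). Define sequences by a_n = n! δ_{n-1}···δ_1 (a_1 = 1), b_1 = M_{2,0}/(1-M_{0,2}), c_1 = 2M_{1,1}/(1-M_{0,2}), and recursively b_n = (M_{2,n-1} a_{n-1} + (n-1) M_{1,n} b_{n-1})/(1 - M_{0,n+1}), c_n = (2 M_{1,n} a_n + (n-1) M_{1,n} c_{n-1})/(1 - M_{0,n+1}). Then for all n ≥ 1: b_n = (n-1)! δ_{n-1}···δ_1 (1 - w_n) where w_n = (n+1)δ_n, and c_n = (n+1)! δ_n···δ_1 = a_{n+1}. -/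
/-!
Integrating `s^i (1-s)^j = s^(i+1) (1-s)^j + s^i (1-s)^(j+1)` gives Pascal's rule
`M i j = M (i+1) j + M i (j+1)`. Writing `D j = 1 - M 0 (j+1)`, it yields `M 1 j = δ j * D j`,
`D j = (1 - δ (j+1)) * D (j+1)`, `M 2 j = M 1 j - M 1 (j+1)` and `δ 0 = 1`; after multiplying by
`D (n+1)`, each step of the recursions for `b` and `c` becomes a polynomial identity in the `δ`'s.
Since `H` lives on `(0,1)`, all moments are positive, so `M 0 (j+1) < M 0 0 = 1` and `D j ≠ 0`.
-/

open MeasureTheory Finset Nat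

lemma integral_pos_of_ae_pos_s12 {α : Type*} [MeasurableSpace α] {μ : Measure α} [NeZero μ]
    {f : α → ℝ} (hfi : Integrable f μ) (hf : ∀ᵐ x ∂μ, 0 < f x) : 0 < ∫ x, f x ∂μ := by
  rw [integral_pos_iff_support_of_nonneg_ae (hf.mono fun _ hx => hx.le) hfi, pos_iff_ne_zero]
  intro hnull
  have hzero : ∀ᵐ x ∂μ, f x = 0 := by simpa [ae_iff, Function.support] using hnull
  obtain ⟨x, hpos, hx⟩ := (hf.and hzero).exists
  exact hpos.ne' hx

noncomputable def betaMoment (H : Measure ℝ) (i j : ℕ) : ℝ :=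
  ∫ s, s ^ i * (1 - s) ^ j ∂H

section betaMoment

variable {H : Measure ℝ}

lemma integrable_pow_mul_one_sub_pow [IsFiniteMeasure H] (hH : ∀ᵐ s ∂H, s ∈ Set.Ioo (0 : ℝ) 1)
    (i j : ℕ) : Integrable (fun s : ℝ => s ^ i * (1 - s) ^ j) H := by
  refine Integrable.mono' (integrable_const (1 : ℝ)) (by fun_prop) ?_
  filter_upwards [hH] with s ⟨h0, h1⟩
  rw [Real.norm_eq_abs, abs_of_nonneg (by positivity)]
  exact mul_le_one₀ (pow_le_one₀ h0.le h1.le) (by positivity) (pow_le_one₀ (by linarith) (by linarith))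

lemma betaMoment_eq_add [IsFiniteMeasure H] (hH : ∀ᵐ s ∂H, s ∈ Set.Ioo (0 : ℝ) 1) (i j : ℕ) :
    betaMoment H i j = betaMoment H (i + 1) j + betaMoment H i (j + 1) := by
  rw [betaMoment, betaMoment, betaMoment, ← integral_add (integrable_pow_mul_one_sub_pow hH _ _)
    (integrable_pow_mul_one_sub_pow hH _ _)]
  congr 1 with s
  ring

lemma betaMoment_pos [IsFiniteMeasure H] [NeZero H] (hH : ∀ᵐ s ∂H, s ∈ Set.Ioo (0 : ℝ) 1)
    (i j : ℕ) : 0 < betaMoment H i j := by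
  refine integral_pos_of_ae_pos_s12 (integrable_pow_mul_one_sub_pow hH i j) ?_
  filter_upwards [hH] with s ⟨h0, h1⟩
  have : 0 < 1 - s := by linarith
  positivity

lemma betaMoment_zero_zero [IsProbabilityMeasure H] : betaMoment H 0 0 = 1 := by
  simp [betaMoment]

lemma betaMoment_zero_succ_lt_one [IsProbabilityMeasure H]
    (hH : ∀ᵐ s ∂H, s ∈ Set.Ioo (0 : ℝ) 1) (k : ℕ) : betaMoment H 0 (k + 1) < 1 := by
  have hanti : StrictAnti (betaMoment H 0) := strictAnti_nat_of_succ_lt fun j => by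
    linarith [betaMoment_eq_add hH 0 j, betaMoment_pos hH 1 j]
  simpa [betaMoment_zero_zero] using hanti k.succ_pos

end betaMoment

section Recurrences

variable {M : ℕ → ℕ → ℝ} {δ : ℕ → ℝ}

lemma moment_one_eq_mul (hD : ∀ j, 1 - M 0 (j + 1) ≠ 0)
    (hδ : ∀ j, δ j = M 1 j / (1 - M 0 (j + 1))) (j : ℕ) :
    M 1 j = δ j * (1 - M 0 (j + 1)) := by
  rw [hδ, div_mul_cancel₀ _ (hD j)]

lemma one_sub_moment_eq_mul (hpascal : ∀ i j, M i j = M (i + 1) j + M i (j + 1))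
    (hD : ∀ j, 1 - M 0 (j + 1) ≠ 0) (hδ : ∀ j, δ j = M 1 j / (1 - M 0 (j + 1))) (j : ℕ) :
    1 - M 0 (j + 1) = (1 - δ (j + 1)) * (1 - M 0 (j + 2)) := by
  rw [hpascal 0 (j + 1), moment_one_eq_mul hD hδ]
  ring

theorem c_eq_factorial_mul_prod (hD : ∀ j, 1 - M 0 (j + 1) ≠ 0)
    (hδ : ∀ j, δ j = M 1 j / (1 - M 0 (j + 1))) {a c : ℕ → ℝ}
    (ha : ∀ n, 1 ≤ n → a n = n.factorial * ∏ k ∈ Icc 1 (n - 1), δ k)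
    (hc1 : c 1 = 2 * M 1 1 / (1 - M 0 2))
    (hc : ∀ n, 2 ≤ n →
      c n = (2 * M 1 n * a n + ((n : ℝ) - 1) * M 1 n * c (n - 1)) / (1 - M 0 (n + 1))) :
    ∀ n, 1 ≤ n → c n = (n + 1).factorial * ∏ k ∈ Icc 1 n, δ k := by
  intro n hn
  induction n, hn using Nat.le_induction with
  | base =>
    rw [hc1, moment_one_eq_mul hD hδ]
    simp only [reduceAdd, factorial_two, cast_ofNat, Icc_self, prod_singleton]
    field_simp [hD 1]
  | succ n hn ih =>
    rw [hc (n + 1) (by omega), Nat.add_sub_cancel, ih, ha (n + 1) (by omega), Nat.add_sub_cancel,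
      moment_one_eq_mul hD hδ, prod_Icc_succ_top (by omega), div_eq_iff (hD _)]
    push_cast [Nat.factorial_succ]
    ring

theorem b_eq_factorial_mul_prod (hpascal : ∀ i j, M i j = M (i + 1) j + M i (j + 1))
    (hM00 : M 0 0 = 1) (hD : ∀ j, 1 - M 0 (j + 1) ≠ 0)
    (hδ : ∀ j, δ j = M 1 j / (1 - M 0 (j + 1))) {a b : ℕ → ℝ}
    (ha : ∀ n, 1 ≤ n → a n = n.factorial * ∏ k ∈ Icc 1 (n - 1), δ k)
    (hb1 : b 1 = M 2 0 / (1 - M 0 2))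
    (hb : ∀ n, 2 ≤ n →
      b n = (M 2 (n - 1) * a (n - 1) + ((n : ℝ) - 1) * M 1 n * b (n - 1)) / (1 - M 0 (n + 1))) :
    ∀ n, 1 ≤ n →
      b n = (n - 1).factorial * (∏ k ∈ Icc 1 (n - 1), δ k) * (1 - ((n : ℝ) + 1) * δ n) := by
  have hM2 : ∀ j, M 2 j = δ j * (1 - M 0 (j + 1)) - δ (j + 1) * (1 - M 0 (j + 2)) := fun j => by
    rw [← moment_one_eq_mul hD hδ, ← moment_one_eq_mul hD hδ, hpascal 1 j]
    ring
  intro n hn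
  induction n, hn using Nat.le_induction with
  | base =>
    have hδ0 : δ 0 = 1 := by
      have h10 : M 1 0 = 1 - M 0 1 := by linarith [hpascal 0 0]
      rw [hδ, h10]
      exact div_self (hD 0)
    rw [hb1, hM2, hδ0, one_sub_moment_eq_mul hpascal hD hδ, div_eq_iff (hD 1)]
    simp only [zero_add, one_mul, tsub_self, factorial_zero, cast_one, Order.lt_one_iff,
      Icc_eq_empty_of_lt, prod_empty, mul_one, reduceAdd]
    ring
  | succ n hn ih =>
    obtain ⟨m, rfl⟩ := Nat.exists_eq_add_of_le' hn
    rw [Nat.add_sub_cancel] at ih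
    rw [hb (m + 1 + 1) (by omega), Nat.add_sub_cancel, ih, ha (m + 1) (by omega), Nat.add_sub_cancel,
      moment_one_eq_mul hD hδ, hM2, one_sub_moment_eq_mul hpascal hD hδ (m + 1),
      prod_Icc_succ_top (by omega), div_eq_iff (hD _)]
    push_cast [Nat.factorial_succ]
    ring

end Recurrences

theorem stmt_12 (H : Measure ℝ) [IsProbabilityMeasure H]
    (hsupp : H (Set.Ioo (0:ℝ) 1)ᶜ = 0)
    (M : ℕ → ℕ → ℝ) (hM : ∀ i j, M i j = ∫ s, s ^ i * (1 - s) ^ j ∂H)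
    (δ : ℕ → ℝ) (hδ : ∀ j, δ j = M 1 j / (1 - M 0 (j + 1)))
    (a b c : ℕ → ℝ)
    (ha : ∀ n, 1 ≤ n → a n = n.factorial * ∏ k ∈ Finset.Icc 1 (n - 1), δ k)
    (hb1 : b 1 = M 2 0 / (1 - M 0 2))
    (hc1 : c 1 = 2 * M 1 1 / (1 - M 0 2))
    (hb : ∀ n, 2 ≤ n →
      b n = (M 2 (n - 1) * a (n - 1) + ((n : ℝ) - 1) * M 1 n * b (n - 1)) / (1 - M 0 (n + 1)))
    (hc : ∀ n, 2 ≤ n →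
      c n = (2 * M 1 n * a n + ((n : ℝ) - 1) * M 1 n * c (n - 1)) / (1 - M 0 (n + 1))) :
    ∀ n, 1 ≤ n →
      b n = (n - 1).factorial * (∏ k ∈ Finset.Icc 1 (n - 1), δ k) * (1 - ((n : ℝ) + 1) * δ n) ∧
      c n = (n + 1).factorial * ∏ k ∈ Finset.Icc 1 n, δ k := by
  have hH : ∀ᵐ s ∂H, s ∈ Set.Ioo (0 : ℝ) 1 := ae_iff.2 hsupp
  obtain rfl : M = betaMoment H := funext₂ hM
  have hD j : 1 - betaMoment H 0 (j + 1) ≠ 0 := (sub_pos.2 (betaMoment_zero_succ_lt_one hH j)).ne'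
  exact fun n hn =>
    ⟨b_eq_factorial_mul_prod (betaMoment_eq_add hH) betaMoment_zero_zero hD hδ ha hb1 hb n hn,
      c_eq_factorial_mul_prod hD hδ ha hc1 hc n hn⟩
end
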